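/- Assume n > 0 and let r = k(d−1) + n·d(d−1)/2 − (d−1). Then any two r-markings on the curve Γ satisfying property (*) are equivalent under D-moves and T-moves. -/

import Mathlib

/-!
Write `L_b` for the distinguished component. Property (*) means that a marking leaves exactly
one node of each `C ∩ L_b` (`C ≠ L_b`, nonempty as `n > 0`) free and marks every other node.
Given two such markings, a node marked by the second but not the first lies on some `C ∩ L_b`,
where the first marks the node left free by the second; a D-move trades it for the new one.
Once both mark the same nodes it remains to realize every transposition of entries. Two entries
on a common component other than `L_b` are exchanged by one D-move or by one to three T-moves
through free nodes of `L_b`. Otherwise the entries lie on distinct `L_a`, `L_a'`, and a marked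
node of `L_a ∩ L_a'` serves as a pivot for three exchanges of the first kind.
-/

namespace SeveriMarkings

/-- Components of the curve Γ: `L_1, …, L_d` (left) and `F_1, …, F_k` (right). -/
abbrev Comp (d k : ℕ) := Sum (Fin d) (Fin k)

/-- Nodes (edges of the multigraph `G(n,d,k)`): `n` edges between `L_i` and `L_j` for `i < j`,
and one edge between each `L_i` and each `F_j`. -/
abbrev Node (n d k : ℕ) :=
  Sum (({p : Fin d × Fin d // p.1 < p.2}) × Fin n) (Fin d × Fin k)

/-- The two endpoints of a node. -/
def ends {n d k : ℕ} : Node n d k → Comp d k × Comp d k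
  | Sum.inl e => (Sum.inl e.1.1.1, Sum.inl e.1.1.2)
  | Sum.inr e => (Sum.inl e.1, Sum.inr e.2)

/-- `joins e C C'` means the node `e` lies in `C ∩ C'`. -/
def joins {n d k : ℕ} (e : Node n d k) (C C' : Comp d k) : Prop :=
  ends e = (C, C') ∨ ends e = (C', C)

/-- `touches e C` means the node `e` is incident to the component `C`. -/
def touches {n d k : ℕ} (e : Node n d k) (C : Comp d k) : Prop :=
  (ends e).1 = C ∨ (ends e).2 = C

/-- The simple graph on the components obtained after deleting a set `E` of edges:
two components are adjacent if some remaining edge joins them. Its connectivity is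
equivalent to connectivity of the multigraph obtained from `G(n,d,k)` by deleting `E`. -/
def remGraph (n d k : ℕ) (E : Set (Node n d k)) : SimpleGraph (Comp d k) :=
  SimpleGraph.fromRel (fun u v => ∃ e, e ∉ E ∧ ends e = (u, v))

/-- A marking `μ` (an injective tuple of nodes) is irreducible if deleting its entries
from `G(n,d,k)` leaves a connected (multi)graph. -/
def IsIrreducible {n d k r : ℕ} (μ : Fin r → Node n d k) : Prop :=
  (remGraph n d k (Set.range μ)).Connected

/-- The intersection number `C.C'`: the number of edges between `C` and `C'`. -/
noncomputable def interNum (n d k : ℕ) (C C' : Comp d k) : ℕ :=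
  Nat.card {e : Node n d k // joins e C C'}

/-- `μ_{C,C'}`: the number of entries of `μ` lying in `C ∩ C'`. -/
noncomputable def markCount {n d k r : ℕ} (μ : Fin r → Node n d k) (C C' : Comp d k) : ℕ :=
  Nat.card {i : Fin r // joins (μ i) C C'}

/-- `μ_C`: the number of entries of `μ` incident to `C`. -/
noncomputable def compCount {n d k r : ℕ} (μ : Fin r → Node n d k) (C : Comp d k) : ℕ :=
  Nat.card {i : Fin r // touches (μ i) C}

/-- A single D-move. -/
def DMove {n d k r : ℕ} (μ μ' : Fin r → Node n d k) : Prop :=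
  ∃ (D D' : Comp d k) (q q' : Node n d k),
    D ≠ D' ∧ q ≠ q' ∧ joins q D D' ∧ joins q' D D' ∧
    ( (q ∉ Set.range μ ∧ ∃ i, μ i = q' ∧ μ' = Function.update μ i q)
    ∨ (q' ∉ Set.range μ ∧ ∃ i, μ i = q ∧ μ' = Function.update μ i q')
    ∨ (∃ i j, μ i = q ∧ μ j = q' ∧ μ' = μ ∘ Equiv.swap i j)
    ∨ (q ∉ Set.range μ ∧ q' ∉ Set.range μ ∧ μ' = μ) )

/-- A single T-move. -/
def TMove {n d k r : ℕ} (μ μ' : Fin r → Node n d k) : Prop :=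
  ∃ (D D' D'' : Comp d k) (q q' q'' : Node n d k),
    D ≠ D' ∧ D ≠ D'' ∧ D' ≠ D'' ∧
    joins q D' D'' ∧ joins q' D D'' ∧ joins q'' D D' ∧
    ( (q' ∈ Set.range μ ∧ μ' = μ)
    ∨ (q' ∉ Set.range μ ∧
        ( (q'' ∉ Set.range μ ∧ ∃ i, μ i = q ∧ μ' = Function.update μ i q'')
        ∨ (q ∉ Set.range μ ∧ ∃ i, μ i = q'' ∧ μ' = Function.update μ i q)
        ∨ (∃ i j, μ i = q ∧ μ j = q'' ∧ μ' = μ ∘ Equiv.swap i j)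
        ∨ (q ∉ Set.range μ ∧ q'' ∉ Set.range μ ∧ μ' = μ))) )

/-- Equivalence of markings: a finite sequence of D-moves and T-moves. -/
def MarkEquiv {n d k r : ℕ} (μ μ' : Fin r → Node n d k) : Prop :=
  Relation.ReflTransGen (fun a b => DMove a b ∨ TMove a b) μ μ'

/-- Property (*) relative to the distinguished component `Ld`. -/
def PropertyStar {n d k r : ℕ} (Ld : Comp d k) (μ : Fin r → Node n d k) : Prop :=
  ∀ C C' : Comp d k, C ≠ C' →
    markCount μ C C' =
      if Ld = C ∨ Ld = C' then interNum n d k C C' - 1 else interNum n d k C C'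


open Function Set

variable {n d k r : ℕ}

lemma ends_fst_ne_snd : ∀ e : Node n d k, (ends e).1 ≠ (ends e).2
  | .inl e => by simpa [ends] using e.1.2.ne
  | .inr _ => by simp [ends]

lemma ends_ne_swap : ∀ x y : Node n d k, ends x ≠ ((ends y).2, (ends y).1)
  | .inl x, .inl y => by
    simp only [ends, ne_eq, Prod.mk.injEq, Sum.inl.injEq, not_and]
    rintro h1 h2
    exact absurd (x.1.2.trans (h2 ▸ h1 ▸ y.1.2)) (lt_irrefl _)
  | .inl _, .inr _ | .inr _, .inl _ | .inr _, .inr _ => by simp [ends]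

lemma joins_ends (e : Node n d k) : joins e (ends e).1 (ends e).2 := Or.inl rfl

lemma joins.symm {e : Node n d k} {C C' : Comp d k} (h : joins e C C') : joins e C' C := Or.symm h

lemma joins.touches_iff {e : Node n d k} {C C' D : Comp d k} (h : joins e C C') :
    touches e D ↔ C = D ∨ C' = D := by
  rcases h with h | h <;> simp [touches, h, or_comm]

lemma touches.exists_joins {e : Node n d k} {C : Comp d k} (h : touches e C) :
    ∃ C', C ≠ C' ∧ joins e C C' := by
  rcases h with rfl | rfl
  · exact ⟨_, ends_fst_ne_snd e, joins_ends e⟩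
  · exact ⟨_, (ends_fst_ne_snd e).symm, (joins_ends e).symm⟩

lemma joins.eq_or_eq {e : Node n d k} {A B C D : Comp d k} (h : joins e A B) (h' : joins e C D) :
    A = C ∧ B = D ∨ A = D ∧ B = C := by
  rcases h with h | h <;> rcases h' with h' | h' <;> rw [h] at h' <;>
    simp only [Prod.mk.injEq] at h' <;> tauto

lemma ends_eq_of_joins {x y : Node n d k} {C C' : Comp d k}
    (hx : joins x C C') (hy : joins y C C') : ends x = ends y := by
  rcases hx with hx | hx <;> rcases hy with hy | hy
  · rw [hx, hy]
  · exact absurd (by rw [hx, hy]) (ends_ne_swap x y)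
  · exact absurd (by rw [hx, hy]) (ends_ne_swap x y)
  · rw [hx, hy]

lemma eq_inr_of_joins {x : Node n d k} {a : Fin d} {s : Fin k}
    (h : joins x (.inl a) (.inr s)) : x = .inr (a, s) := by
  rcases x with _ | ⟨a', s'⟩ <;> rcases h with h | h <;> simp_all [ends]

lemma exists_joins_inl (hn : 0 < n) {b : Fin d} :
    ∀ {C : Comp d k}, C ≠ .inl b → ∃ e : Node n d k, joins e C (.inl b)
  | .inl a, h => by
    obtain hab | hab := lt_or_gt_of_ne fun hab => h (congrArg _ hab)
    · exact ⟨.inl ⟨⟨(a, b), hab⟩, ⟨0, hn⟩⟩, Or.inl rfl⟩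
    · exact ⟨.inl ⟨⟨(b, a), hab⟩, ⟨0, hn⟩⟩, Or.inr rfl⟩
  | .inr s, _ => ⟨.inr (b, s), Or.inr rfl⟩

lemma range_update_of_injective {ι α : Type*} [DecidableEq ι] {f : ι → α} (hf : Injective f)
    (i : ι) (a : α) : range (update f i a) = insert a (range f \ {f i}) := by
  ext x
  simp only [mem_insert_iff, mem_sdiff, mem_range, mem_singleton_iff]
  constructor
  · rintro ⟨l, rfl⟩
    rcases eq_or_ne l i with rfl | hl
    · simp
    · rw [update_of_ne hl]
      exact Or.inr ⟨⟨l, rfl⟩, hf.ne hl⟩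
  · rintro (rfl | ⟨⟨l, rfl⟩, hl⟩)
    · exact ⟨i, update_self i x f⟩
    · exact ⟨l, update_of_ne (fun h => hl (congrArg f h)) a f⟩

lemma injective_update_of_notMem_range {ι α : Type*} [DecidableEq ι] {f : ι → α}
    (hf : Injective f) (i : ι) {a : α} (ha : a ∉ range f) : Injective (update f i a) := by
  intro l m h
  simp only [update_apply] at h
  split_ifs at h with hl hm hm
  · rw [hl, hm]
  · exact absurd ⟨m, h.symm⟩ ha
  · exact absurd ⟨l, h⟩ ha
  · exact hf h

lemma exists_perm_comp_eq_of_range_eq {ι α : Type*} {μ ν : ι → α} (hμ : Injective μ)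
    (hν : Injective ν) (h : range ν = range μ) : ∃ σ : Equiv.Perm ι, μ ∘ σ = ν :=
  ⟨(Equiv.ofInjective ν hν).trans ((Equiv.setCongr h).trans (Equiv.ofInjective μ hμ).symm),
    funext fun _ => Equiv.apply_ofInjective_symm hμ _⟩

lemma markCount_comp_perm (ν : Fin r → Node n d k) (σ : Equiv.Perm (Fin r)) (C C' : Comp d k) :
    markCount (ν ∘ σ) C C' = markCount ν C C' :=
  Nat.card_congr (σ.subtypeEquiv fun _ => Iff.rfl)

lemma markCount_update_of_ends_eq (ν : Fin r → Node n d k) (i : Fin r) {a : Node n d k}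
    (h : ends a = ends (ν i)) (C C' : Comp d k) :
    markCount (update ν i a) C C' = markCount ν C C' := by
  refine Nat.card_congr (Equiv.subtypeEquivRight fun l => ?_)
  rcases eq_or_ne l i with rfl | hl
  · simp only [update_self, joins, h]
  · rw [update_of_ne hl]

lemma markCount_add_ncard_unmarked {μ : Fin r → Node n d k} (hμ : Injective μ)
    (C C' : Comp d k) :
    markCount μ C C' + ({e | joins e C C'} \ range μ).ncard = interNum n d k C C' := by
  have hmarked : markCount μ C C' = ({e | joins e C C'} ∩ range μ).ncard := by
    rw [← image_preimage_eq_inter_range, ncard_image_of_injective _ hμ]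
    exact Nat.card_coe_set_eq _
  rw [hmarked, ncard_inter_add_ncard_sdiff_eq_ncard]
  exact (Nat.card_coe_set_eq _).symm

namespace PropertyStar

variable {Ld : Comp d k} {μ : Fin r → Node n d k}

lemma comp_perm (hs : PropertyStar Ld μ) (σ : Equiv.Perm (Fin r)) : PropertyStar Ld (μ ∘ σ) :=
  fun C C' h => (markCount_comp_perm μ σ C C').trans (hs C C' h)

lemma update_of_ends_eq (hs : PropertyStar Ld μ) (i : Fin r) {a : Node n d k}
    (h : ends a = ends (μ i)) :
    PropertyStar Ld (update μ i a) :=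
  fun C C' hC => (markCount_update_of_ends_eq μ i h C C').trans (hs C C' hC)

lemma mem_range (hs : PropertyStar Ld μ) (hμ : Injective μ) {x : Node n d k}
    (hx : ¬ touches x Ld) : x ∈ range μ := by
  have hcount := markCount_add_ncard_unmarked hμ (ends x).1 (ends x).2
  rw [hs _ _ (ends_fst_ne_snd x), if_neg fun h => hx (h.imp Eq.symm Eq.symm),
    Nat.add_eq_left, ncard_eq_zero] at hcount
  by_contra hxμ
  exact (eq_empty_iff_forall_notMem.1 hcount) x ⟨joins_ends x, hxμ⟩

lemma existsUnique_unmarked (hs : PropertyStar Ld μ) (hμ : Injective μ) {C : Comp d k}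
    (hC : C ≠ Ld) {w : Node n d k} (hw : joins w C Ld) :
    ∃! e, joins e C Ld ∧ e ∉ range μ := by
  have hpos : 0 < interNum n d k C Ld :=
    have : Nonempty {e : Node n d k // joins e C Ld} := ⟨⟨w, hw⟩⟩
    Nat.card_pos
  have hcount := markCount_add_ncard_unmarked hμ C Ld
  rw [hs C Ld hC, if_pos (Or.inr rfl)] at hcount
  obtain ⟨e, he⟩ := ncard_eq_one.1 (by omega : ({x | joins x C Ld} \ range μ).ncard = 1)
  simp only [Set.ext_iff, mem_sdiff, mem_ofPred_eq, mem_singleton_iff] at he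
  exact ⟨e, (he e).2 rfl, fun y hy => (he y).1 hy⟩

variable {b : Fin d}

lemma exists_unmarked (hn : 0 < n) (hs : PropertyStar (.inl b) μ) (hμ : Injective μ)
    {C : Comp d k} (hC : C ≠ .inl b) : ∃ e, joins e C (.inl b) ∧ e ∉ range μ :=
  have ⟨_, hw⟩ := exists_joins_inl hn hC
  (hs.existsUnique_unmarked hμ hC hw).exists

lemma exists_touches_inl_ne (hs : PropertyStar (.inl b) μ) (hμ : Injective μ) (i : Fin r) :
    ∃ a, a ≠ b ∧ touches (μ i) (.inl a) := by
  cases h : μ i with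
  | inl e =>
    by_cases hb : e.1.1.1 = b
    · exact ⟨e.1.1.2, fun h' => e.1.2.ne (hb.trans h'.symm), Or.inr rfl⟩
    · exact ⟨e.1.1.1, hb, Or.inl rfl⟩
  | inr e =>
    refine ⟨e.1, fun hb => ?_, Or.inl rfl⟩
    -- the only node of `F_s ∩ L_b` is `μ i`, yet (*) leaves one node there unmarked
    have hj : joins (μ i) (.inr e.2) (.inl b) := by rw [h, ← hb]; exact Or.inr rfl
    obtain ⟨x, ⟨hx, hxμ⟩, -⟩ := hs.existsUnique_unmarked hμ (by simp) hj
    exact hxμ ⟨i, by rw [h, eq_inr_of_joins hx.symm, ← hb]⟩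

end PropertyStar

section Moves

variable {ν : Fin r → Node n d k} {i j : Fin r}

lemma markEquiv_comp_swap_of_joins {C C' : Comp d k} (hC : C ≠ C') (hi : joins (ν i) C C')
    (hj : joins (ν j) C C') (hne : ν i ≠ ν j) : MarkEquiv ν (ν ∘ Equiv.swap i j) :=
  .single (Or.inl ⟨C, C', ν i, ν j, hC, hne, hi, hj,
    Or.inr (Or.inr (Or.inl ⟨i, j, rfl, rfl, rfl⟩))⟩)

lemma markEquiv_update_of_joins {C C' : Comp d k} (hC : C ≠ C') {q : Node n d k}
    (hi : joins (ν i) C C') (hq : joins q C C') (hne : ν i ≠ q) (hqν : q ∉ range ν) :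
    MarkEquiv ν (update ν i q) :=
  .single (Or.inl ⟨C, C', ν i, q, hC, hne, hi, hq, Or.inr (Or.inl ⟨hqν, i, rfl, rfl⟩)⟩)

variable {X Y Z : Comp d k}

lemma markEquiv_comp_swap_of_triangle (hXY : X ≠ Y) (hXZ : X ≠ Z) (hYZ : Y ≠ Z)
    (hi : joins (ν i) Y Z) (hj : joins (ν j) X Y) {q : Node n d k} (hq : joins q X Z)
    (hqν : q ∉ range ν) : MarkEquiv ν (ν ∘ Equiv.swap i j) :=
  .single (Or.inr ⟨X, Y, Z, ν i, q, ν j, hXY, hXZ, hYZ, hi, hq, hj,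
    Or.inr ⟨hqν, Or.inr (Or.inr (Or.inl ⟨i, j, rfl, rfl, rfl⟩))⟩⟩)

lemma markEquiv_update_of_triangle (hXY : X ≠ Y) (hXZ : X ≠ Z) (hYZ : Y ≠ Z)
    (hi : joins (ν i) Y Z) {q q' : Node n d k} (hq : joins q X Z) (hq' : joins q' X Y)
    (hqν : q ∉ range ν) (hq'ν : q' ∉ range ν) : MarkEquiv ν (update ν i q') :=
  .single (Or.inr ⟨X, Y, Z, ν i, q, q', hXY, hXZ, hYZ, hi, hq, hq',
    Or.inr ⟨hqν, Or.inl ⟨hq'ν, i, rfl, rfl⟩⟩⟩)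

/-- Three T-moves: park `ν i` on the free node of `A ∩ Ld`, move `ν j` to position `i`,
and bring `ν i` back at position `j`. -/
lemma markEquiv_comp_swap_of_unmarked (hν : Injective ν) (hij : i ≠ j) {A B C Ld : Comp d k}
    (hAB : A ≠ B) (hAC : A ≠ C) (hALd : A ≠ Ld) (hBLd : B ≠ Ld) (hCLd : C ≠ Ld)
    (hi : joins (ν i) A B) (hj : joins (ν j) A C) {mA mB mC : Node n d k}
    (hmA : joins mA A Ld) (hmAν : mA ∉ range ν) (hmB : joins mB B Ld) (hmBν : mB ∉ range ν)
    (hmC : joins mC C Ld) (hmCν : mC ∉ range ν) : MarkEquiv ν (ν ∘ Equiv.swap i j) := by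
  have hmAB : mA ≠ mB := by
    rintro rfl; rcases hmA.eq_or_eq hmB with h | h <;> [exact hAB h.1; exact hALd h.1]
  have hmAC : mA ≠ mC := by
    rintro rfl; rcases hmA.eq_or_eq hmC with h | h <;> [exact hAC h.1; exact hALd h.1]
  set ν₁ := update ν i mA
  have hrange₁ : range (ν₁ ∘ Equiv.swap i j) = insert mA (range ν \ {ν i}) := by
    rw [(Equiv.surjective _).range_comp, range_update_of_injective hν]
  have step₁ : MarkEquiv ν ν₁ :=
    markEquiv_update_of_triangle hALd.symm hBLd.symm hAB hi hmB.symm hmA.symm hmBν hmAν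
  have step₂ : MarkEquiv ν₁ (ν₁ ∘ Equiv.swap i j) := by
    refine markEquiv_comp_swap_of_triangle hAC.symm hCLd hALd (by simpa [ν₁] using hmA)
      (by simpa [ν₁, update_of_ne hij.symm] using hj.symm) hmC ?_
    rw [range_update_of_injective hν]
    simp [hmAC.symm, hmCν]
  have step₃ :
      MarkEquiv (ν₁ ∘ Equiv.swap i j) (update (ν₁ ∘ Equiv.swap i j) j (ν i)) :=
    markEquiv_update_of_triangle hAB.symm hBLd hALd (by simpa [ν₁] using hmA) hmB hi.symm
      (by simp [hrange₁, hmAB.symm, hmBν]) (by simpa [hrange₁] using fun h => hmAν ⟨i, h⟩)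
  have hcomp : update (ν₁ ∘ Equiv.swap i j) j (ν i) = ν ∘ Equiv.swap i j := by
    funext w
    simp only [ν₁, comp_apply, update_apply, Equiv.swap_apply_def]
    split_ifs <;> simp_all
  exact hcomp ▸ (step₁.trans step₂).trans step₃

end Moves

namespace PropertyStar

variable {b : Fin d} {μ ν : Fin r → Node n d k} {i j : Fin r}

lemma markEquiv_comp_swap_of_touches (hn : 0 < n) (hs : PropertyStar (.inl b) ν)
    (hν : Injective ν) (hij : i ≠ j) {A : Comp d k} (hA : A ≠ .inl b) (hi : touches (ν i) A)
    (hj : touches (ν j) A) : MarkEquiv ν (ν ∘ Equiv.swap i j) := by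
  obtain ⟨B, hAB, hi⟩ := hi.exists_joins
  obtain ⟨C, hAC, hj⟩ := hj.exists_joins
  by_cases hBC : B = C
  · subst hBC
    exact markEquiv_comp_swap_of_joins hAB hi hj (hν.ne hij)
  by_cases hB : B = .inl b
  · subst hB
    obtain ⟨m, hm, hmν⟩ := hs.exists_unmarked hn hν (Ne.symm hBC)
    exact markEquiv_comp_swap_of_triangle hAC.symm (Ne.symm hBC) hA hi hj.symm hm hmν
  by_cases hC : C = .inl b
  · subst hC
    obtain ⟨m, hm, hmν⟩ := hs.exists_unmarked hn hν hBC
    exact Equiv.swap_comm i j ▸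
      markEquiv_comp_swap_of_triangle hAB.symm hBC hA hj hi.symm hm hmν
  obtain ⟨mA, hmA, hmAν⟩ := hs.exists_unmarked hn hν hA
  obtain ⟨mB, hmB, hmBν⟩ := hs.exists_unmarked hn hν hB
  obtain ⟨mC, hmC, hmCν⟩ := hs.exists_unmarked hn hν hC
  exact markEquiv_comp_swap_of_unmarked hν hij hAB hAC hA hB hC hi hj hmA hmAν hmB hmBν hmC hmCν

/-- Conjugate the transposition `(i j)` by `(i l)`, where `ν l` is a node of `L_a ∩ L_a'`:
each of the three swaps involves two entries on a common component. -/
lemma markEquiv_comp_swap_of_not_touches (hn : 0 < n) (hs : PropertyStar (.inl b) ν)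
    (hν : Injective ν) (hij : i ≠ j) {a a' : Fin d} (ha : a ≠ b) (ha' : a' ≠ b)
    (hi : touches (ν i) (.inl a)) (hj : touches (ν j) (.inl a'))
    (hia' : ¬ touches (ν i) (.inl a')) (hja : ¬ touches (ν j) (.inl a)) :
    MarkEquiv ν (ν ∘ Equiv.swap i j) := by
  have haa' : (.inl a : Comp d k) ≠ .inl a' := fun h => hia' (h ▸ hi)
  obtain ⟨g, hg⟩ := exists_joins_inl hn haa'
  obtain ⟨l, hl⟩ := hs.mem_range hν (x := g) (by simp [hg.touches_iff, ha, ha'])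
  have hla : touches (ν l) (.inl a) := hl ▸ hg.touches_iff.2 (Or.inl rfl)
  have hla' : touches (ν l) (.inl a') := hl ▸ hg.touches_iff.2 (Or.inr rfl)
  have hil : i ≠ l := by rintro rfl; exact hia' hla'
  have hjl : j ≠ l := by rintro rfl; exact hja hla
  set ν₁ := ν ∘ Equiv.swap i l
  set ν₂ := ν₁ ∘ Equiv.swap i j
  have step₁ : MarkEquiv ν ν₁ :=
    hs.markEquiv_comp_swap_of_touches hn hν hil (by simpa) hi hla
  have step₂ : MarkEquiv ν₁ ν₂ :=
    (hs.comp_perm _).markEquiv_comp_swap_of_touches hn (hν.comp (Equiv.injective _)) hij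
      (A := .inl a') (by simpa) (by simpa [ν₁] using hla')
      (by simpa [ν₁, Equiv.swap_apply_of_ne_of_ne hij.symm hjl] using hj)
  have step₃ : MarkEquiv ν₂ (ν₂ ∘ Equiv.swap j l) :=
    ((hs.comp_perm _).comp_perm _).markEquiv_comp_swap_of_touches hn
      ((hν.comp (Equiv.injective _)).comp (Equiv.injective _)) hjl (A := .inl a) (by simpa)
      (by simpa [ν₁, ν₂] using hla)
      (by simpa [ν₁, ν₂, Equiv.swap_apply_of_ne_of_ne hil.symm hjl.symm] using hi)
  have hcomp : ν₂ ∘ Equiv.swap j l = ν ∘ Equiv.swap i j := by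
    funext w
    simp only [ν₁, ν₂, comp_apply, Equiv.swap_apply_def]
    split_ifs <;> simp_all
  exact hcomp ▸ (step₁.trans step₂).trans step₃

lemma markEquiv_comp_swap (hn : 0 < n) (hs : PropertyStar (.inl b) ν) (hν : Injective ν)
    (i j : Fin r) : MarkEquiv ν (ν ∘ Equiv.swap i j) := by
  rcases eq_or_ne i j with rfl | hij
  · rw [Equiv.swap_self, Equiv.coe_refl, comp_id]
    exact .refl
  by_cases hshare : ∃ A ≠ (.inl b : Comp d k), touches (ν i) A ∧ touches (ν j) A
  · obtain ⟨A, hA, hi, hj⟩ := hshare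
    exact hs.markEquiv_comp_swap_of_touches hn hν hij hA hi hj
  push Not at hshare
  obtain ⟨a, ha, hi⟩ := hs.exists_touches_inl_ne hν i
  obtain ⟨a', ha', hj⟩ := hs.exists_touches_inl_ne hν j
  exact hs.markEquiv_comp_swap_of_not_touches hn hν hij ha ha' hi hj
    (fun h => hshare _ (by simpa) h hj) (fun h => hshare _ (by simpa) hi h)

lemma markEquiv_comp_perm (hn : 0 < n) (hs : PropertyStar (.inl b) ν) (hν : Injective ν)
    (σ : Equiv.Perm (Fin r)) : MarkEquiv ν (ν ∘ σ) := by
  induction σ using Equiv.Perm.swap_induction_on generalizing ν with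
  | one => exact .refl
  | swap_mul σ x y _ ih =>
    exact (hs.markEquiv_comp_swap hn hν x y).trans
      (ih (hs.comp_perm _) (hν.comp (Equiv.injective _)))

theorem markEquiv (hn : 0 < n) (hsμ : PropertyStar (.inl b) μ) (hμ : Injective μ)
    (hsν : PropertyStar (.inl b) ν) (hν : Injective ν) : MarkEquiv μ ν := by
  induction hm : (range ν \ range μ).ncard generalizing μ with
  | zero =>
    have hsub : range ν ⊆ range μ := sdiff_eq_empty.1 ((ncard_eq_zero).1 hm)
    have hrange : range ν = range μ := eq_of_subset_of_ncard_le hsub <| by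
      rw [ncard_range_of_injective hμ, ncard_range_of_injective hν]
    obtain ⟨σ, rfl⟩ := exists_perm_comp_eq_of_range_eq hμ hν hrange
    exact hsμ.markEquiv_comp_perm hn hμ σ
  | succ m ih =>
    obtain ⟨e, heν, heμ⟩ : (range ν \ range μ).Nonempty :=
      nonempty_of_ncard_ne_zero (by omega)
    obtain ⟨C, hC, he⟩ := (not_not.1 (mt (hsμ.mem_range hμ) heμ)).exists_joins
    replace he : joins e C (.inl b) := he.symm
    obtain ⟨f, ⟨hf, hfν⟩, -⟩ := hsν.existsUnique_unmarked hν (Ne.symm hC) he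
    have hfe : f ≠ e := fun h => hfν (h ▸ heν)
    obtain ⟨i, rfl⟩ : f ∈ range μ := by
      by_contra hfμ
      exact hfe <|
        (hsμ.existsUnique_unmarked hμ (Ne.symm hC) he).unique ⟨hf, hfμ⟩ ⟨he, heμ⟩
    have hdiff : range ν \ range (update μ i e) = (range ν \ range μ) \ {e} := by
      rw [range_update_of_injective hμ]
      ext x
      simp only [mem_sdiff, mem_insert_iff, mem_singleton_iff, not_or, not_and, not_not]
      constructor
      · rintro ⟨hx, hxe, hxμ⟩
        exact ⟨⟨hx, fun h => hfν (hxμ h ▸ hx)⟩, hxe⟩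
      · rintro ⟨⟨hx, hxμ⟩, hxe⟩
        exact ⟨hx, hxe, fun h => absurd h hxμ⟩
    have hm' : (range ν \ range (update μ i e)).ncard = m := by
      have he' : e ∈ range ν \ range μ := ⟨heν, heμ⟩
      rw [hdiff, ncard_sdiff_singleton_of_mem he', hm, Nat.add_sub_cancel]
    have hsμ' := hsμ.update_of_ends_eq i (ends_eq_of_joins he hf)
    exact (markEquiv_update_of_joins (Ne.symm hC) hf he hfe heμ).trans
      (ih hsμ' (injective_update_of_notMem_range hμ i heμ) hm')

end PropertyStar

/-- Step 2 of Lemma 4 of the paper. Assume `n > 0` and let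
`r = k(d−1) + n·d(d−1)/2 − (d−1)`. Then any two `r`-markings on the curve `Γ` satisfying
property (*) are equivalent under D-moves and T-moves. -/
theorem stmt5 (n d k : ℕ) (hn : 0 < n) (hd : 0 < d)
    (μ μ' : Fin (k * (d - 1) + n * (d * (d - 1) / 2) - (d - 1)) → Node n d k)
    (hμ : Function.Injective μ) (hμ' : Function.Injective μ')
    (hs : PropertyStar (Sum.inl ⟨d - 1, by omega⟩) μ)
    (hs' : PropertyStar (Sum.inl ⟨d - 1, by omega⟩) μ') :
    MarkEquiv μ μ' :=
  hs.markEquiv hn hμ hs' hμ'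

end SeveriMarkings
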